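/- Let S be a K'-blind set of configurations of the product system of an IOPP with a deterministic Rabin automaton. Then post*(S) (the set of configurations reachable from S under accelerated steps) is K-blind for K := |Q|² · max(K', 2B), where B bounds the weight of minimal transfer flows in T(Δ^*). The same holds for pre*(S). -/
import Mathlib


/-- ℕ extended with an extra element `#` (represented by `none`),
which is an identity for addition and incomparable with integers. -/
abbrev NS := Option ℕ

def NS.sharp : NS := none

def NS.add : NS → NS → NS
  | none, x => x
  | some a, none => some a
  | some a, some b => some (a + b)

instance : Add NS := ⟨NS.add⟩
instance : Zero NS := ⟨none⟩

instance : AddCommMonoid NS where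
  add_assoc a b c := by
    show NS.add (NS.add a b) c = NS.add a (NS.add b c)
    cases a <;> cases b <;> cases c <;> simp [NS.add, Nat.add_assoc]
  zero_add a := by cases a <;> rfl
  add_zero a := by cases a <;> rfl
  add_comm a b := by
    show NS.add a b = NS.add b a
    cases a <;> cases b <;> simp [NS.add, Nat.add_comm]
  nsmul := nsmulRec

/-- The order on `NS`: `#` is only comparable with `#`. -/
def NS.le : NS → NS → Prop
  | none, none => True
  | some a, some b => a ≤ b
  | _, _ => False

def NS.lt (x y : NS) : Prop := NS.le x y ∧ x ≠ y

/-- A transfer flow: an agent part `f` and a control part `(src, dst)`. -/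
structure TF (Q L : Type) where
  f : Q → Q → NS
  src : L
  dst : L

/-- The order `⪯` on transfer flows. -/
def TF.le {Q L : Type} (t1 t2 : TF Q L) : Prop :=
  t1.src = t2.src ∧ t1.dst = t2.dst ∧ ∀ q q', NS.le (t1.f q q') (t2.f q q')

/-- The product `tf1 ⊗ tf2` of two transfer flows. -/
def TF.prod {Q L : Type} [Fintype Q] (t1 t2 : TF Q L) : Set (TF Q L) :=
  { t | t1.dst = t2.src ∧ t.src = t1.src ∧ t.dst = t2.dst ∧
    ∃ H : Q → Q → Q → NS,
      (∀ q1 q3, (∑ q2, H q1 q2 q3) = t.f q1 q3) ∧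
      (∀ q1 q2, NS.le (t1.f q1 q2) (∑ q3, H q1 q2 q3)) ∧
      (∀ q2 q3, NS.le (t2.f q2 q3) (∑ q1, H q1 q2 q3)) }

/-- The weight of a transfer flow: `#` contributes nothing. -/
def TF.weight {Q L : Type} [Fintype Q] (t : TF Q L) : ℕ :=
  ∑ q, ∑ q', (t.f q q').getD 0

/-- Minimality with respect to `⪯` within a set of transfer flows. -/
def MinimalIn {Q L : Type} (S : Set (TF Q L)) (t : TF Q L) : Prop :=
  t ∈ S ∧ ∀ t' ∈ S, TF.le t' t → t' = t
/-- An immediate observation transition `(q1, q2) → (q1, q3)`, written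
`q2 --q1--> q3`: an agent in `src` observes an agent in `obs` and moves
to `dst`. -/
structure IOTrans (Q : Type) where
  obs : Q
  src : Q
  dst : Q

/-- One step of the protocol using transition `t = (q1,q2) → (q1,q3)`:
one agent moves from `t.src` to `t.dst` while observing an agent in `t.obs`. -/
def ProtStep {Q : Type} [DecidableEq Q] (t : IOTrans Q) (γ γ' : Q → ℕ) : Prop :=
  1 ≤ γ t.obs ∧ 1 ≤ γ t.src ∧ (t.obs = t.src → 2 ≤ γ t.obs) ∧
  ∀ q, γ' q = γ q - (if q = t.src then 1 else 0) + (if q = t.dst then 1 else 0)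

/-- `c1 →tf c2`: a step from configuration `c1` to `c2` following a
transfer flow `tf`, via a step witness `g ≥ f`. -/
def FlowStep {Q L : Type} [Fintype Q] (tf : TF Q L) (c1 c2 : (Q → ℕ) × L) : Prop :=
  c1.2 = tf.src ∧ c2.2 = tf.dst ∧
  ∃ g : Q → Q → NS,
    (∀ q q', NS.le (tf.f q q') (g q q')) ∧
    (∀ q, (some (c1.1 q) : NS) = ∑ q', g q q') ∧
    (∀ q, (some (c2.1 q) : NS) = ∑ q', g q' q)

/-- The set `T(t)` of transfer flows associated with a transition
`t = (q1,q2) → (q1,q3)` of the IOPP, where `Tr` is the transition function of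
the deterministic Rabin automaton. -/
def Tset {Q L : Type} [DecidableEq Q] (Tr : L → IOTrans Q → L) (t : IOTrans Q) :
    Set (TF Q L) :=
  { tf | Tr tf.src t = tf.dst ∧
    ((t.obs ≠ t.src ∨ t.obs ≠ t.dst) →
      NS.le (some 1) (tf.f t.obs t.obs) ∧ NS.le (some 1) (tf.f t.src t.dst)) ∧
    ((t.obs = t.src ∧ t.obs = t.dst) → NS.le (some 2) (tf.f t.obs t.obs)) ∧
    (∀ q, q ≠ t.obs → (q, q) ≠ (t.src, t.dst) → NS.le (some 0) (tf.f q q)) ∧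
    (∀ q q', q ≠ q' → (q, q') ≠ (t.src, t.dst) → tf.f q q' = NS.sharp) }

/-- The product extended to sets of transfer flows. -/
def setProd {Q L : Type} [Fintype Q] (F F' : Set (TF Q L)) : Set (TF Q L) :=
  ⋃ t1 ∈ F, ⋃ t2 ∈ F', TF.prod t1 t2

/-- `T(ε)`: transfer flows of the empty sequence. -/
def Teps {Q L : Type} : Set (TF Q L) :=
  { tf | tf.src = tf.dst ∧ (∀ q, tf.f q q ≠ NS.sharp) ∧
    ∀ q q', q ≠ q' → tf.f q q' = NS.sharp }

/-- `T(w)` for a word `w = t1 … tk`: the product `T(t1) ⊗ … ⊗ T(tk)`. -/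
def Tword {Q L : Type} [Fintype Q] [DecidableEq Q] (Tr : L → IOTrans Q → L) :
    List (IOTrans Q) → Set (TF Q L)
  | [] => Teps
  | t :: w => setProd (Tset Tr t) (Tword Tr w)

/-- `T(Δ^{≤k})`: transfer flows of sequences of at most `k` transitions. -/
def TBounded {Q L : Type} [Fintype Q] [DecidableEq Q] (Tr : L → IOTrans Q → L)
    (k : ℕ) : Set (TF Q L) :=
  ⋃ w ∈ { w : List (IOTrans Q) | w.length ≤ k }, Tword Tr w

/-- `T(Δ^*)`: transfer flows of all finite sequences of transitions. -/
def TStar {Q L : Type} [Fintype Q] [DecidableEq Q] (Tr : L → IOTrans Q → L) :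
    Set (TF Q L) :=
  ⋃ w : List (IOTrans Q), Tword Tr w

/-- `γ + 1_q`: add one occurrence of state `q` to the multiset `γ`. -/
def addAgent {Q : Type} [DecidableEq Q] (γ : Q → ℕ) (q : Q) : Q → ℕ :=
  fun q' => γ q' + if q' = q then 1 else 0

/-- A set `S` of configurations of the product system is `K`-blind. -/
def Blind {Q L : Type} [DecidableEq Q] (K : ℕ) (S : Set ((Q → ℕ) × L)) : Prop :=
  ∀ (γ : Q → ℕ) (ℓ : L) (q : Q), K ≤ γ q →
    ((γ, ℓ) ∈ S ↔ (addAgent γ q, ℓ) ∈ S)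

/-- An (accelerated) step of the product system: an accelerated step of the
protocol using some transition `t`, read by the Rabin automaton. -/
def ProdStep {Q L : Type} [DecidableEq Q] (Tr : L → IOTrans Q → L)
    (c c' : (Q → ℕ) × L) : Prop :=
  ∃ t, Relation.TransGen (ProtStep t) c.1 c'.1 ∧ Tr c.2 t = c'.2

/-- `post*(S)`: configurations reachable from `S` under accelerated steps. -/
def postStar {Q L : Type} [DecidableEq Q] (Tr : L → IOTrans Q → L)
    (S : Set ((Q → ℕ) × L)) : Set ((Q → ℕ) × L) :=
  { c | ∃ c0 ∈ S, Relation.ReflTransGen (ProdStep Tr) c0 c }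

/-- `pre*(S)`: configurations from which `S` is reachable. -/
def preStar {Q L : Type} [DecidableEq Q] (Tr : L → IOTrans Q → L)
    (S : Set ((Q → ℕ) × L)) : Set ((Q → ℕ) × L) :=
  { c | ∃ c1 ∈ S, Relation.ReflTransGen (ProdStep Tr) c c1 }


/-! ### Auxiliary infrastructure -/

section Aux

namespace NS

lemma add_def (a b : NS) : a + b = NS.add a b := rfl

@[simp] lemma getD_add (a b : NS) : (a + b).getD 0 = a.getD 0 + b.getD 0 := by
  rw [add_def]; cases a <;> cases b <;> simp [NS.add]

@[simp] lemma isSome_add (a b : NS) : (a + b).isSome = (a.isSome || b.isSome) := by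
  rw [add_def]; cases a <;> cases b <;> rfl

lemma zero_def : (0 : NS) = none := rfl

lemma ext2 {a b : NS} (h1 : a.isSome = b.isSome) (h2 : a.getD 0 = b.getD 0) : a = b := by
  cases a <;> cases b <;> simp_all

lemma le_iff {a b : NS} : NS.le a b ↔ (a.isSome = b.isSome ∧ a.getD 0 ≤ b.getD 0) := by
  cases a <;> cases b <;> simp [NS.le]

lemma le_refl (a : NS) : NS.le a a := by rw [le_iff]; exact ⟨rfl, Nat.le_refl _⟩

lemma le_trans {a b c : NS} (h1 : NS.le a b) (h2 : NS.le b c) : NS.le a c := by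
  rw [le_iff] at *
  exact ⟨h1.1.trans h2.1, h1.2.trans h2.2⟩

end NS

lemma NS.getD_sum {α : Type*} (s : Finset α) (f : α → NS) :
    (∑ x ∈ s, f x).getD 0 = ∑ x ∈ s, (f x).getD 0 := by
  induction s using Finset.cons_induction with
  | empty => rfl
  | cons a s ha ih => rw [Finset.sum_cons, Finset.sum_cons, NS.getD_add, ih]

lemma NS.isSome_sum {α : Type*} (s : Finset α) (f : α → NS) :
    (∑ x ∈ s, f x).isSome = true ↔ ∃ x ∈ s, (f x).isSome = true := by
  induction s using Finset.cons_induction with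
  | empty => simp [NS.zero_def]
  | cons a s ha ih => rw [Finset.sum_cons, NS.isSome_add]; simp [ih]

lemma NS.eq_some_iff {x : NS} {n : ℕ} : some n = x ↔ (x.isSome = true ∧ x.getD 0 = n) := by
  cases x <;> simp_all [eq_comm]

lemma NS.le_sum {α : Type*} (s : Finset α) (f g : α → NS)
    (h : ∀ x ∈ s, NS.le (f x) (g x)) :
    NS.le (∑ x ∈ s, f x) (∑ x ∈ s, g x) := by
  rw [NS.le_iff]
  constructor
  · rw [Bool.eq_iff_iff, NS.isSome_sum, NS.isSome_sum]
    constructor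
    · rintro ⟨x, hx, hs⟩
      exact ⟨x, hx, by have := (NS.le_iff.1 (h x hx)).1; rw [← this]; exact hs⟩
    · rintro ⟨x, hx, hs⟩
      exact ⟨x, hx, by have := (NS.le_iff.1 (h x hx)).1; rw [this]; exact hs⟩
  · rw [NS.getD_sum, NS.getD_sum]
    exact Finset.sum_le_sum (fun x hx => (NS.le_iff.1 (h x hx)).2)

end Aux


section Transport

variable {Q : Type} [Fintype Q] [DecidableEq Q]

lemma nat_transport : ∀ (N : ℕ) (u v : Q → ℕ), (∑ i, u i) = N → (∑ j, v j) = N →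
    ∃ h : Q → Q → ℕ, (∀ i, (∑ j, h i j) = u i) ∧ (∀ j, (∑ i, h i j) = v j) := by
  intro N
  induction N with
  | zero =>
    intro u v hu hv
    refine ⟨fun _ _ => 0, fun i => ?_, fun j => ?_⟩
    · rw [Finset.sum_eq_zero_iff.1 hu i (Finset.mem_univ i)]
      exact Finset.sum_const_zero
    · rw [Finset.sum_eq_zero_iff.1 hv j (Finset.mem_univ j)]
      exact Finset.sum_const_zero
  | succ N ih =>
    intro u v hu hv
    have hex : ∃ i, u i ≠ 0 := by
      by_contra h
      push_neg at h
      simp [h] at hu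
    have hex' : ∃ j, v j ≠ 0 := by
      by_contra h
      push_neg at h
      simp [h] at hv
    obtain ⟨i0, hi0⟩ := hex
    obtain ⟨j0, hj0⟩ := hex'
    have hu' : (∑ i, Function.update u i0 (u i0 - 1) i) = N := by
      rw [Finset.sum_update_of_mem (Finset.mem_univ i0)]
      rw [Finset.sum_eq_sum_sdiff_singleton_add (Finset.mem_univ i0)] at hu
      omega
    have hv' : (∑ j, Function.update v j0 (v j0 - 1) j) = N := by
      rw [Finset.sum_update_of_mem (Finset.mem_univ j0)]
      rw [Finset.sum_eq_sum_sdiff_singleton_add (Finset.mem_univ j0)] at hv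
      omega
    obtain ⟨h, hrow, hcol⟩ := ih _ _ hu' hv'
    refine ⟨fun a b => h a b + if a = i0 ∧ b = j0 then 1 else 0, fun a => ?_, fun b => ?_⟩
    · rw [Finset.sum_add_distrib, hrow a]
      have : (∑ b, if a = i0 ∧ b = j0 then 1 else 0) = if a = i0 then 1 else 0 := by
        by_cases ha : a = i0 <;> simp [ha]
      rw [this]
      by_cases ha : a = i0 <;> simp [ha, Function.update] <;> omega
    · rw [Finset.sum_add_distrib, hcol b]
      have : (∑ a, if a = i0 ∧ b = j0 then 1 else 0) = if b = j0 then 1 else 0 := by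
        by_cases hb : b = j0 <;> simp [hb]
      rw [this]
      by_cases hb : b = j0 <;> simp [hb, Function.update] <;> omega

lemma ns_transport (u v : Q → NS) (htot : (∑ i, u i) = ∑ j, v j) :
    ∃ h : Q → Q → NS, (∀ i, (∑ j, h i j) = u i) ∧ (∀ j, (∑ i, h i j) = v j) := by
  by_cases hs : (∑ i, u i).isSome = true
  · have hsv : (∑ j, v j).isSome = true := by rw [← htot]; exact hs
    obtain ⟨h, hrow, hcol⟩ := nat_transport ((∑ i, u i).getD 0) (fun i => (u i).getD 0)
      (fun j => (v j).getD 0) (NS.getD_sum _ _).symm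
      (by rw [← NS.getD_sum]; exact congrArg (fun x => x.getD 0) htot.symm)
    have hzu : ∀ i, (u i).isSome = false → ∀ j, h i j = 0 := by
      intro i hi j
      have : (∑ j, h i j) = 0 := by
        rw [hrow i]; cases hh : u i
        · rfl
        · rw [hh] at hi; simp at hi
      have := Finset.sum_eq_zero_iff.1 this j (Finset.mem_univ j)
      exact this
    have hzv : ∀ j, (v j).isSome = false → ∀ i, h i j = 0 := by
      intro j hj i
      have : (∑ i, h i j) = 0 := by
        rw [hcol j]; cases hh : v j
        · rfl
        · rw [hh] at hj; simp at hj
      exact Finset.sum_eq_zero_iff.1 this i (Finset.mem_univ i)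
    refine ⟨fun i j => if (u i).isSome ∧ (v j).isSome then some (h i j) else none,
      fun i => ?_, fun j => ?_⟩
    · by_cases hi : (u i).isSome = true
      · refine NS.ext2 ?_ ?_
        · rw [hi]
          obtain ⟨j, hj, hjs⟩ := (NS.isSome_sum _ _).1 hsv
          exact (NS.isSome_sum _ _).2 ⟨j, hj, by simp [hi, hjs]⟩
        · rw [NS.getD_sum]
          have : ∀ j, ((if (u i).isSome ∧ (v j).isSome then some (h i j) else none) : NS).getD 0
              = h i j := by
            intro j
            by_cases hj : (v j).isSome = true
            · simp [hi, hj]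
            · simp only [Bool.not_eq_true] at hj
              simp [hzv j hj i, hj]
          rw [Finset.sum_congr rfl (fun j _ => this j), hrow i]
      · simp only [Bool.not_eq_true] at hi
        have : ∀ j, ((if (u i).isSome ∧ (v j).isSome then some (h i j) else none) : NS) = 0 := by
          intro j; simp [hi, NS.zero_def]
        rw [Finset.sum_congr rfl (fun j _ => this j), Finset.sum_const_zero]
        cases hh : u i
        · rfl
        · rw [hh] at hi; simp at hi
    · by_cases hj : (v j).isSome = true
      · refine NS.ext2 ?_ ?_
        · rw [hj]
          obtain ⟨i, hi, his⟩ := (NS.isSome_sum _ _).1 hs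
          exact (NS.isSome_sum _ _).2 ⟨i, hi, by simp [hj, his]⟩
        · rw [NS.getD_sum]
          have : ∀ i, ((if (u i).isSome ∧ (v j).isSome then some (h i j) else none) : NS).getD 0
              = h i j := by
            intro i
            by_cases hi : (u i).isSome = true
            · simp [hi, hj]
            · simp only [Bool.not_eq_true] at hi
              simp [hzu i hi j, hi]
          rw [Finset.sum_congr rfl (fun i _ => this i), hcol j]
      · simp only [Bool.not_eq_true] at hj
        have : ∀ i, ((if (u i).isSome ∧ (v j).isSome then some (h i j) else none) : NS) = 0 := by
          intro i; simp [hj, NS.zero_def]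
        rw [Finset.sum_congr rfl (fun i _ => this i), Finset.sum_const_zero]
        cases hh : v j
        · rfl
        · rw [hh] at hj; simp at hj
  · simp only [Bool.not_eq_true] at hs
    have hsv : (∑ j, v j).isSome = false := by rw [← htot]; exact hs
    have hu0 : ∀ i, u i = none := by
      intro i
      cases hh : u i
      · rfl
      · exfalso
        have : (∑ i, u i).isSome = true := (NS.isSome_sum _ _).2 ⟨i, Finset.mem_univ i, by simp [hh]⟩
        rw [hs] at this; exact Bool.false_ne_true this
    have hv0 : ∀ j, v j = none := by
      intro j
      cases hh : v j
      · rfl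
      · exfalso
        have : (∑ j, v j).isSome = true := (NS.isSome_sum _ _).2 ⟨j, Finset.mem_univ j, by simp [hh]⟩
        rw [hsv] at this; exact Bool.false_ne_true this
    refine ⟨fun _ _ => none, fun i => ?_, fun j => ?_⟩
    · rw [hu0 i]
      exact Finset.sum_const_zero
    · rw [hv0 j]
      exact Finset.sum_const_zero

end Transport


section Flows

variable {Q L : Type} [Fintype Q] [DecidableEq Q]

/-- `FlowStep` with an explicit witness. -/
def FlowStepG (tf : TF Q L) (g : Q → Q → NS) (c1 c2 : (Q → ℕ) × L) : Prop :=
  c1.2 = tf.src ∧ c2.2 = tf.dst ∧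
    (∀ q q', NS.le (tf.f q q') (g q q')) ∧
    (∀ q, (some (c1.1 q) : NS) = ∑ q', g q q') ∧
    (∀ q, (some (c2.1 q) : NS) = ∑ q', g q' q)

lemma flowStep_iff {tf : TF Q L} {c1 c2 : (Q → ℕ) × L} :
    FlowStep tf c1 c2 ↔ ∃ g, FlowStepG tf g c1 c2 := by
  constructor
  · rintro ⟨h1, h2, g, h3, h4, h5⟩
    exact ⟨g, h1, h2, h3, h4, h5⟩
  · rintro ⟨g, h1, h2, h3, h4, h5⟩
    exact ⟨h1, h2, g, h3, h4, h5⟩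

lemma teps_flow (c : (Q → ℕ) × L) : ∃ tf ∈ (Teps : Set (TF Q L)), FlowStep tf c c := by
  refine ⟨⟨fun a b => if a = b then some 0 else none, c.2, c.2⟩, ⟨rfl, ?_, ?_⟩, ?_⟩
  · intro q; simp [NS.sharp]
  · intro q q' h; simp [NS.sharp, h]
  · refine flowStep_iff.2 ⟨fun a b => if a = b then some (c.1 a) else none, rfl, rfl, ?_, ?_, ?_⟩
    · intro q q'
      by_cases h : q = q' <;> simp [h, NS.le_iff]
    · intro q
      have h1 : (∑ q', (fun a b => if a = b then (some (c.1 a) : NS) else none) q q')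
          = if q = q then some (c.1 q) else none :=
        Finset.sum_eq_single q (fun b _ hb => by simp only [if_neg (Ne.symm hb)]; rfl)
          (fun hq => absurd (Finset.mem_univ q) hq)
      rw [h1, if_pos rfl]
    · intro q
      have h1 : (∑ q', (fun a b => if a = b then (some (c.1 a) : NS) else none) q' q)
          = if q = q then some (c.1 q) else none :=
        Finset.sum_eq_single q (fun b _ hb => by simp only [if_neg hb]; rfl)
          (fun hq => absurd (Finset.mem_univ q) hq)
      rw [h1, if_pos rfl]

lemma teps_sound {tf : TF Q L} {c1 c2 : (Q → ℕ) × L} (htf : tf ∈ (Teps : Set (TF Q L)))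
    (h : FlowStep tf c1 c2) : c1 = c2 := by
  obtain ⟨hsd, hdiag, hoff⟩ := htf
  obtain ⟨g, h1, h2, h3, h4, h5⟩ := flowStep_iff.1 h
  have hgoff : ∀ q q', q ≠ q' → g q q' = none := by
    intro q q' hne
    have := h3 q q'
    rw [hoff q q' hne] at this
    cases hg : g q q'
    · rfl
    · rw [hg] at this; simp [NS.sharp, NS.le] at this
  have key : ∀ q, c1.1 q = c2.1 q := by
    intro q
    have e1 : (some (c1.1 q) : NS) = g q q := by
      rw [h4 q, Finset.sum_eq_single q]
      · intro b _ hb; exact hgoff q b (Ne.symm hb)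
      · intro hq; exact absurd (Finset.mem_univ q) hq
    have e2 : (some (c2.1 q) : NS) = g q q := by
      rw [h5 q, Finset.sum_eq_single q]
      · intro b _ hb; exact hgoff b q hb
      · intro hq; exact absurd (Finset.mem_univ q) hq
    rw [← e1] at e2
    exact (Option.some_injective _ e2).symm
  have h6 : c1.2 = c2.2 := by rw [h1, h2, hsd]
  exact Prod.ext_iff.2 ⟨funext key, h6⟩

/-- Composition of two flow steps. -/
lemma flow_compose {a b : TF Q L} {c c' c'' : (Q → ℕ) × L}
    (ha : FlowStep a c c') (hb : FlowStep b c' c'') :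
    ∃ x ∈ TF.prod a b, FlowStep x c c'' := by
  obtain ⟨g1, ha1, ha2, ha3, ha4, ha5⟩ := flowStep_iff.1 ha
  obtain ⟨g2, hb1, hb2, hb3, hb4, hb5⟩ := flowStep_iff.1 hb
  have glue : ∀ q2 : Q, ∃ h : Q → Q → NS,
      (∀ q1, (∑ q3, h q1 q3) = g1 q1 q2) ∧ (∀ q3, (∑ q1, h q1 q3) = g2 q2 q3) := by
    intro q2
    exact ns_transport (fun q1 => g1 q1 q2) (fun q3 => g2 q2 q3)
      (by rw [← ha5 q2, ← hb4 q2])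
  choose Hf Hrow Hcol using glue
  refine ⟨⟨fun q1 q3 => ∑ q2, Hf q2 q1 q3, a.src, b.dst⟩,
    ⟨by rw [← ha2, ← hb1], rfl, rfl, fun q1 q2 q3 => Hf q2 q1 q3,
      fun q1 q3 => rfl, ?_, ?_⟩, ?_⟩
  · intro q1 q2
    rw [show (∑ q3, Hf q2 q1 q3) = g1 q1 q2 from Hrow q2 q1]
    exact ha3 q1 q2
  · intro q2 q3
    rw [show (∑ q1, Hf q2 q1 q3) = g2 q2 q3 from Hcol q2 q3]
    exact hb3 q2 q3
  · refine flowStep_iff.2 ⟨fun q1 q3 => ∑ q2, Hf q2 q1 q3, by rw [ha1], by rw [hb2], ?_, ?_, ?_⟩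
    · intro q q'; exact NS.le_refl _
    · intro q1
      show (some (c.1 q1) : NS) = ∑ q3, ∑ q2, Hf q2 q1 q3
      rw [Finset.sum_comm, ha4 q1]
      exact Finset.sum_congr rfl (fun q2 _ => (Hrow q2 q1).symm)
    · intro q3
      show (some (c''.1 q3) : NS) = ∑ q1, ∑ q2, Hf q2 q1 q3
      rw [Finset.sum_comm, hb5 q3]
      exact Finset.sum_congr rfl (fun q2 _ => (Hcol q2 q3).symm)


lemma NS.isSome_of_le_some {n : ℕ} {x : NS} (h : NS.le (some n) x) : x.isSome = true :=
  ((NS.le_iff.1 h).1).symm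

lemma tset_diag_some {Tr : L → IOTrans Q → L} {t : IOTrans Q} {a : TF Q L}
    (ha : a ∈ Tset Tr t) : ∀ q, (a.f q q).isSome = true := by
  obtain ⟨hTr, h2, h3, h4, h5⟩ := ha
  intro q
  by_cases hq : q = t.obs
  · subst hq
    by_cases hb : t.obs = t.src ∧ t.obs = t.dst
    · exact NS.isSome_of_le_some (h3 hb)
    · exact NS.isSome_of_le_some ((h2 (by tauto)).1)
  · by_cases hp : (q, q) = (t.src, t.dst)
    · have h6 : q = t.src := congrArg Prod.fst hp
      have h7 : q = t.dst := congrArg Prod.snd hp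
      have := (h2 (Or.inl (by rw [← h6]; exact Ne.symm hq))).2
      rw [← h6, ← h7] at this
      exact NS.isSome_of_le_some this
    · exact NS.isSome_of_le_some (h4 q hq hp)

/-- Decomposition of a flow step along a product. -/
lemma flow_decompose {a b x : TF Q L} {c c'' : (Q → ℕ) × L}
    (hx : x ∈ TF.prod a b) (h : FlowStep x c c'')
    (hdiag : ∀ q, (a.f q q).isSome = true) :
    ∃ c', FlowStep a c c' ∧ FlowStep b c' c'' := by
  obtain ⟨hab, hsrc, hdst, H, hH1, hH2, hH3⟩ := hx
  obtain ⟨g, h1, h2, h3, h4, h5⟩ := flowStep_iff.1 h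
  classical
  have hch : ∀ q1 q3 : Q, ∃ q2 : Q,
      ((x.f q1 q3).isSome = true → (H q1 q2 q3).isSome = true) := by
    intro q1 q3
    by_cases hs : (x.f q1 q3).isSome = true
    · obtain ⟨q2, _, hq2⟩ := (NS.isSome_sum _ _).1 (by rw [hH1 q1 q3]; exact hs)
      exact ⟨q2, fun _ => hq2⟩
    · exact ⟨q1, fun hc => absurd hc hs⟩
  choose q2c hq2c using hch
  set s : Q → Q → ℕ := fun q1 q3 => (g q1 q3).getD 0 - (x.f q1 q3).getD 0 with hs_def
  set G : Q → Q → Q → NS := fun q1 q2 q3 =>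
    H q1 q2 q3 + (if q2 = q2c q1 q3 ∧ (H q1 q2 q3).isSome = true
      then some (s q1 q3) else none) with hG_def
  have hGsome : ∀ q1 q2 q3, (G q1 q2 q3).isSome = (H q1 q2 q3).isSome := by
    intro q1 q2 q3
    show (H q1 q2 q3 + _).isSome = _
    rw [NS.isSome_add]
    by_cases hH : (H q1 q2 q3).isSome = true
    · simp [hH]
    · simp only [Bool.not_eq_true] at hH
      simp [hH]
  have hGle : ∀ q1 q2 q3, NS.le (H q1 q2 q3) (G q1 q2 q3) := by
    intro q1 q2 q3
    rw [NS.le_iff, hGsome]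
    refine ⟨rfl, ?_⟩
    show _ ≤ (H q1 q2 q3 + _).getD 0
    rw [NS.getD_add]
    omega
  have hGcol : ∀ q1 q3, (∑ q2, G q1 q2 q3) = g q1 q3 := by
    intro q1 q3
    have hxg : (x.f q1 q3).isSome = (g q1 q3).isSome := (NS.le_iff.1 (h3 q1 q3)).1
    refine NS.ext2 ?_ ?_
    · rw [Bool.eq_iff_iff, NS.isSome_sum]
      constructor
      · rintro ⟨q2, _, hq⟩
        rw [← hxg, ← hH1 q1 q3]
        exact (NS.isSome_sum _ _).2 ⟨q2, Finset.mem_univ q2, by rw [← hGsome]; exact hq⟩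
      · intro hg
        have hsum : (∑ q2, H q1 q2 q3).isSome = true := by rw [hH1 q1 q3, hxg]; exact hg
        obtain ⟨q2, hq2m, hq2⟩ := (NS.isSome_sum _ _).1 hsum
        exact ⟨q2, hq2m, by rw [hGsome]; exact hq2⟩
    · rw [NS.getD_sum]
      have e1 : ∀ q2, (G q1 q2 q3).getD 0 = (H q1 q2 q3).getD 0 +
          (if q2 = q2c q1 q3 ∧ (H q1 q2 q3).isSome = true then s q1 q3 else 0) := by
        intro q2
        show (H q1 q2 q3 + _).getD 0 = _
        rw [NS.getD_add]
        by_cases hc : q2 = q2c q1 q3 ∧ (H q1 q2 q3).isSome = true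
        · rw [if_pos hc, if_pos hc]; rfl
        · rw [if_neg hc, if_neg hc]; rfl
      rw [Finset.sum_congr rfl (fun q2 _ => e1 q2), Finset.sum_add_distrib]
      have e2 : (∑ q2, (H q1 q2 q3).getD 0) = (x.f q1 q3).getD 0 := by
        rw [← NS.getD_sum, hH1 q1 q3]
      have e3 : (∑ q2, if q2 = q2c q1 q3 ∧ (H q1 q2 q3).isSome = true then s q1 q3 else 0)
          = if (H q1 (q2c q1 q3) q3).isSome = true then s q1 q3 else 0 := by
        rw [Finset.sum_eq_single (q2c q1 q3)]
        · simp
        · intro q2 _ hne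
          rw [if_neg (fun hc => hne hc.1)]
        · intro hq; exact absurd (Finset.mem_univ _) hq
      rw [e2, e3]
      by_cases hx3 : (x.f q1 q3).isSome = true
      · rw [if_pos (hq2c q1 q3 hx3)]
        have hle := (NS.le_iff.1 (h3 q1 q3)).2
        simp only [hs_def]
        omega
      · have hHn : ¬ (H q1 (q2c q1 q3) q3).isSome = true := by
          intro hcon
          have hsum : (∑ q2, H q1 q2 q3).isSome = true :=
            (NS.isSome_sum _ _).2 ⟨_, Finset.mem_univ _, hcon⟩
          rw [hH1 q1 q3] at hsum
          exact hx3 hsum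
        rw [if_neg hHn]
        have hxnone : x.f q1 q3 = none := by
          cases hxx : x.f q1 q3
          · rfl
          · rw [hxx] at hx3; simp at hx3
        have hgnone : g q1 q3 = none := by
          cases hgg : g q1 q3
          · rfl
          · rw [hgg, hxnone] at hxg; simp at hxg
        rw [hxnone, hgnone]
        rfl
  have hg1a : ∀ q1 q2, NS.le (a.f q1 q2) (∑ q3, G q1 q2 q3) := fun q1 q2 =>
    NS.le_trans (hH2 q1 q2) (NS.le_sum _ _ _ (fun q3 _ => hGle q1 q2 q3))
  have hg2b : ∀ q2 q3, NS.le (b.f q2 q3) (∑ q1, G q1 q2 q3) := fun q2 q3 =>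
    NS.le_trans (hH3 q2 q3) (NS.le_sum _ _ _ (fun q1 _ => hGle q1 q2 q3))
  have hrow1 : ∀ q1, (some (c.1 q1) : NS) = ∑ q2, ∑ q3, G q1 q2 q3 := by
    intro q1
    rw [h4 q1]
    calc (∑ q', g q1 q') = ∑ q3, ∑ q2, G q1 q2 q3 :=
        Finset.sum_congr rfl (fun q3 _ => (hGcol q1 q3).symm)
      _ = ∑ q2, ∑ q3, G q1 q2 q3 := Finset.sum_comm
  have hcol2 : ∀ q3, (some (c''.1 q3) : NS) = ∑ q2, ∑ q1, G q1 q2 q3 := by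
    intro q3
    rw [h5 q3]
    calc (∑ q', g q' q3) = ∑ q1, ∑ q2, G q1 q2 q3 :=
        Finset.sum_congr rfl (fun q1 _ => (hGcol q1 q3).symm)
      _ = ∑ q2, ∑ q1, G q1 q2 q3 := Finset.sum_comm
  have hmidsome : ∀ q2, (∑ q1, ∑ q3, G q1 q2 q3).isSome = true := by
    intro q2
    have hss := (NS.le_iff.1 (hg1a q2 q2)).1
    exact (NS.isSome_sum _ _).2 ⟨q2, Finset.mem_univ q2, by rw [← hss]; exact hdiag q2⟩
  refine ⟨((fun q2 => (∑ q1, ∑ q3, G q1 q2 q3).getD 0), a.dst), ?_, ?_⟩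
  · exact flowStep_iff.2 ⟨fun q1 q2 => ∑ q3, G q1 q2 q3, by rw [h1, hsrc], rfl, hg1a, hrow1,
      fun q2 => NS.eq_some_iff.2 ⟨hmidsome q2, rfl⟩⟩
  · refine flowStep_iff.2 ⟨fun q2 q3 => ∑ q1, G q1 q2 q3, hab, by rw [h2, hdst], hg2b, ?_, hcol2⟩
    intro q2
    show (some ((∑ q1, ∑ q3, G q1 q2 q3).getD 0) : NS) = ∑ q3, ∑ q1, G q1 q2 q3
    have swap : (∑ q3, ∑ q1, G q1 q2 q3) = ∑ q1, ∑ q3, G q1 q2 q3 := Finset.sum_comm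
    rw [swap]
    exact NS.eq_some_iff.2 ⟨hmidsome q2, rfl⟩


lemma NS.getD_le_of_le {a b : NS} (h : NS.le a b) : a.getD 0 ≤ b.getD 0 :=
  (NS.le_iff.1 h).2

/-- Net effect of an accelerated step. -/
lemma run_net {t : IOTrans Q} {γ γ' : Q → ℕ} (h : Relation.TransGen (ProtStep t) γ γ') :
    ∃ k : ℕ, 1 ≤ k ∧
      (∀ q, γ' q + (if q = t.src then k else 0) = γ q + (if q = t.dst then k else 0)) ∧
      1 ≤ γ t.obs ∧ 1 ≤ γ t.src ∧ (t.obs = t.src → 2 ≤ γ t.obs) ∧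
      (t.obs = t.src → 1 ≤ γ' t.obs) ∧ 1 ≤ γ' t.obs := by
  induction h with
  | @single γ'' hstep =>
    obtain ⟨ho, hs, hself, heq⟩ := hstep
    refine ⟨1, le_refl 1, fun q => ?_, ho, hs, hself, ?_, ?_⟩
    · have hq := heq q
      by_cases h1 : q = t.src
      · subst h1
        rw [if_pos rfl] at hq ⊢
        by_cases h2 : t.src = t.dst
        · rw [if_pos h2] at hq ⊢; omega
        · rw [if_neg h2] at hq ⊢; omega
      · rw [if_neg h1] at hq ⊢
        by_cases h2 : q = t.dst
        · subst h2; rw [if_pos rfl] at hq ⊢; omega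
        · rw [if_neg h2] at hq ⊢; omega
    · intro hos
      have hq := heq t.obs
      have h2 := hself hos
      rw [if_pos hos] at hq
      by_cases h3 : t.obs = t.dst
      · rw [if_pos h3] at hq; omega
      · rw [if_neg h3] at hq; omega
    · have hq := heq t.obs
      by_cases hos : t.obs = t.src
      · have h2 := hself hos
        rw [if_pos hos] at hq
        by_cases h3 : t.obs = t.dst
        · rw [if_pos h3] at hq; omega
        · rw [if_neg h3] at hq; omega
      · rw [if_neg hos] at hq
        by_cases h3 : t.obs = t.dst
        · rw [if_pos h3] at hq; omega
        · rw [if_neg h3] at hq; omega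
  | @tail b γ'' htg hstep ih =>
    obtain ⟨k, hk1, hnet, ho, hs, hself, hself', hobs'⟩ := ih
    obtain ⟨ho2, hs2, hself2, heq2⟩ := hstep
    refine ⟨k + 1, by omega, fun q => ?_, ho, hs, hself, ?_, ?_⟩
    · have h1 := hnet q
      have h2 := heq2 q
      by_cases hqs : q = t.src
      · subst hqs
        rw [if_pos rfl] at h1 h2 ⊢
        by_cases hqd : t.src = t.dst
        · rw [if_pos hqd] at h1 h2 ⊢
          have hbs : 1 ≤ b t.src := hs2
          omega
        · rw [if_neg hqd] at h1 h2 ⊢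
          have hbs : 1 ≤ b t.src := hs2
          omega
      · rw [if_neg hqs] at h1 h2 ⊢
        by_cases hqd : q = t.dst
        · subst hqd; rw [if_pos rfl] at h1 h2 ⊢; omega
        · rw [if_neg hqd] at h1 h2 ⊢; omega
    · intro hos
      have h2 := heq2 t.obs
      have h3 := hself2 hos
      have h4 := hself' hos
      rw [if_pos hos] at h2
      by_cases hod : t.obs = t.dst
      · rw [if_pos hod] at h2; omega
      · rw [if_neg hod] at h2; omega
    · have h2 := heq2 t.obs
      by_cases hos : t.obs = t.src
      · have h3 := hself2 hos
        rw [if_pos hos] at h2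
        by_cases hod : t.obs = t.dst
        · rw [if_pos hod] at h2; omega
        · rw [if_neg hod] at h2; omega
      · rw [if_neg hos] at h2
        by_cases hod : t.obs = t.dst
        · rw [if_pos hod] at h2; omega
        · rw [if_neg hod] at h2; omega

lemma run_build_self {t : IOTrans Q} {γ : Q → ℕ} (hsd : t.src = t.dst)
    (ho : 1 ≤ γ t.obs) (hs : 1 ≤ γ t.src) (hself : t.obs = t.src → 2 ≤ γ t.obs) :
    Relation.TransGen (ProtStep t) γ γ := by
  refine Relation.TransGen.single ⟨ho, hs, hself, fun q => ?_⟩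
  by_cases h1 : q = t.src
  · subst h1
    rw [if_pos rfl, if_pos hsd]
    omega
  · rw [if_neg h1, if_neg (fun hd => h1 (hd.trans hsd.symm))]
    omega

lemma run_build_move {t : IOTrans Q} (hsd : t.src ≠ t.dst) :
    ∀ (k : ℕ) (γ : Q → ℕ), 1 ≤ k → k ≤ γ t.src → 1 ≤ γ t.obs →
      (t.obs = t.src → k + 1 ≤ γ t.src) →
      Relation.TransGen (ProtStep t) γ
        (fun q => γ q - (if q = t.src then k else 0) + (if q = t.dst then k else 0)) := by
  intro k
  induction k with
  | zero => intro γ h; omega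
  | succ k ih =>
    intro γ _ hk ho hself
    have hstep : ProtStep t γ (fun q => γ q - (if q = t.src then 1 else 0)
        + (if q = t.dst then 1 else 0)) := by
      refine ⟨ho, by omega, ?_, fun q => rfl⟩
      intro hos
      have h1 := hself hos
      rw [hos]
      omega
    by_cases hk0 : k = 0
    · subst hk0
      exact Relation.TransGen.single ⟨hstep.1, hstep.2.1, hstep.2.2.1, hstep.2.2.2⟩
    · have hs1 : k ≤ γ t.src - (if t.src = t.src then 1 else 0)
          + (if t.src = t.dst then 1 else 0) := by
        rw [if_pos rfl, if_neg hsd]; omega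
      have hs2 : 1 ≤ γ t.obs - (if t.obs = t.src then 1 else 0)
          + (if t.obs = t.dst then 1 else 0) := by
        by_cases hos : t.obs = t.src
        · have h1 := hself hos
          rw [if_pos hos]
          have h2 : γ t.obs = γ t.src := by rw [hos]
          omega
        · rw [if_neg hos]; omega
      have hs3 : t.obs = t.src → k + 1 ≤ γ t.src - (if t.src = t.src then 1 else 0)
          + (if t.src = t.dst then 1 else 0) := by
        intro hos
        have h1 := hself hos
        rw [if_pos rfl, if_neg hsd]
        omega
      have ihr := ih (fun q => γ q - (if q = t.src then 1 else 0)
        + (if q = t.dst then 1 else 0)) (by omega) hs1 hs2 hs3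
      have heq : (fun q => (γ q - (if q = t.src then 1 else 0) + (if q = t.dst then 1 else 0))
            - (if q = t.src then k else 0) + (if q = t.dst then k else 0))
          = (fun q => γ q - (if q = t.src then k + 1 else 0)
            + (if q = t.dst then k + 1 else 0)) := by
        funext q
        by_cases h1 : q = t.src
        · subst h1
          rw [if_pos rfl, if_pos rfl, if_pos rfl, if_neg hsd, if_neg hsd, if_neg hsd]
          omega
        · rw [if_neg h1, if_neg h1, if_neg h1]
          by_cases h2 : q = t.dst
          · rw [if_pos h2, if_pos h2, if_pos h2]; omega
          · rw [if_neg h2, if_neg h2, if_neg h2]; omega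
      rw [heq] at ihr
      exact Relation.TransGen.head hstep ihr


lemma tset_complete {Tr : L → IOTrans Q → L} {t : IOTrans Q} {γ γ' : Q → ℕ} (ℓ : L)
    (h : Relation.TransGen (ProtStep t) γ γ') :
    ∃ a ∈ Tset Tr t, FlowStep a (γ, ℓ) (γ', Tr ℓ t) := by
  obtain ⟨k, hk1, hnet, ho, hs, hself, hself', hobs'⟩ := run_net h
  by_cases hsd : t.src = t.dst
  · -- self-loop case: γ' = γ
    have hgg : ∀ q, γ' q = γ q := by
      intro q
      have h1 := hnet q
      by_cases h2 : q = t.src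
      · rw [if_pos h2, if_pos (h2.trans hsd)] at h1; omega
      · rw [if_neg h2, if_neg (fun hd => h2 (hd.trans hsd.symm))] at h1; omega
    refine ⟨⟨fun q q' => if q = q' then some (if q = t.obs then (if t.obs = t.src then 2 else 1)
        else if q = t.src then 1 else 0) else none, ℓ, Tr ℓ t⟩,
      ⟨rfl, ?_, ?_, ?_, ?_⟩, ?_⟩
    · intro _
      constructor
      · show NS.le (some 1) (if t.obs = t.obs then some (if t.obs = t.obs
            then (if t.obs = t.src then 2 else 1) else if t.obs = t.src then 1 else 0) else none)
        rw [if_pos rfl, if_pos rfl, NS.le_iff]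
        refine ⟨rfl, ?_⟩
        simp only [Option.getD_some]
        split_ifs <;> omega
      · show NS.le (some 1) (if t.src = t.dst then some (if t.src = t.obs
            then (if t.obs = t.src then 2 else 1) else if t.src = t.src then 1 else 0) else none)
        rw [if_pos hsd, NS.le_iff]
        refine ⟨rfl, ?_⟩
        simp only [Option.getD_some]
        by_cases h1 : t.src = t.obs
        · rw [if_pos h1, if_pos h1.symm]; omega
        · rw [if_neg h1]; simp
    · rintro ⟨e1, e2⟩
      show NS.le (some 2) (if t.obs = t.obs then some (if t.obs = t.obs
          then (if t.obs = t.src then 2 else 1) else if t.obs = t.src then 1 else 0) else none)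
      rw [if_pos rfl, if_pos rfl, if_pos e1, NS.le_iff]
      exact ⟨rfl, le_refl _⟩
    · intro q _ _
      show NS.le (some 0) (if q = q then some (if q = t.obs then (if t.obs = t.src then 2 else 1)
          else if q = t.src then 1 else 0) else none)
      rw [if_pos rfl, NS.le_iff]
      exact ⟨rfl, Nat.zero_le _⟩
    · intro q q' hne _
      show (if q = q' then some (if q = t.obs then (if t.obs = t.src then 2 else 1)
          else if q = t.src then 1 else 0) else none) = NS.sharp
      rw [if_neg hne]
      rfl
    · refine flowStep_iff.2 ⟨fun q q' => if q = q' then some (γ q) else none, rfl, rfl, ?_, ?_, ?_⟩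
      · intro q q'
        by_cases hqq : q = q'
        · show NS.le (if q = q' then some (if q = t.obs then (if t.obs = t.src then 2 else 1)
              else if q = t.src then 1 else 0) else none) (if q = q' then some (γ q) else none)
          rw [if_pos hqq, if_pos hqq, NS.le_iff]
          refine ⟨rfl, ?_⟩
          simp only [Option.getD_some]
          by_cases h1 : q = t.obs
          · rw [if_pos h1]
            have e : γ q = γ t.obs := by rw [h1]
            by_cases h2 : t.obs = t.src
            · have := hself h2
              rw [if_pos h2]
              omega
            · rw [if_neg h2]
              omega
          · rw [if_neg h1]
            by_cases h2 : q = t.src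
            · rw [if_pos h2]
              have e : γ q = γ t.src := by rw [h2]
              omega
            · rw [if_neg h2]
              omega
        · show NS.le (if q = q' then some (if q = t.obs then (if t.obs = t.src then 2 else 1)
              else if q = t.src then 1 else 0) else none) (if q = q' then some (γ q) else none)
          rw [if_neg hqq, if_neg hqq]
          exact NS.le_refl _
      · intro q
        have h1 : (∑ q', ((if q = q' then some (γ q) else none) : NS))
            = if q = q then some (γ q) else none :=
          Finset.sum_eq_single q (fun b _ hb => by rw [if_neg (Ne.symm hb)]; rfl)
            (fun hq => absurd (Finset.mem_univ q) hq)
        show (some (γ q) : NS) = ∑ q', if q = q' then some (γ q) else none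
        rw [h1, if_pos rfl]
      · intro q
        have h1 : (∑ q', ((if q' = q then some (γ q') else none) : NS))
            = if q = q then some (γ q) else none :=
          Finset.sum_eq_single q (fun b _ hb => by rw [if_neg hb]; rfl)
            (fun hq => absurd (Finset.mem_univ q) hq)
        show (some (γ' q) : NS) = ∑ q', if q' = q then some (γ q') else none
        rw [h1, if_pos rfl, hgg q]
  · -- moving case
    have hks : k ≤ γ t.src := by
      have h1 := hnet t.src
      rw [if_pos rfl, if_neg hsd] at h1
      omega
    have hsk1 : t.obs = t.src → k + 1 ≤ γ t.src := by
      intro hos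
      have h1 := hnet t.src
      rw [if_pos rfl, if_neg hsd] at h1
      have h2 := hself' hos
      have h3 : γ' t.obs = γ' t.src := by rw [hos]
      omega
    refine ⟨⟨fun q q' => if q = q' then some (if q = t.obs then 1 else 0)
        else if q = t.src ∧ q' = t.dst then some 1 else none, ℓ, Tr ℓ t⟩,
      ⟨rfl, ?_, ?_, ?_, ?_⟩, ?_⟩
    · intro _
      constructor
      · show NS.le (some 1) (if t.obs = t.obs then some (if t.obs = t.obs then 1 else 0)
            else if t.obs = t.src ∧ t.obs = t.dst then some 1 else none)
        rw [if_pos rfl, if_pos rfl, NS.le_iff]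
        exact ⟨rfl, le_refl _⟩
      · show NS.le (some 1) (if t.src = t.dst then some (if t.src = t.obs then 1 else 0)
            else if t.src = t.src ∧ t.dst = t.dst then some 1 else none)
        rw [if_neg hsd, if_pos ⟨rfl, rfl⟩]
        exact NS.le_refl _
    · rintro ⟨e1, e2⟩
      exact absurd (e1.symm.trans e2) hsd
    · intro q _ _
      show NS.le (some 0) (if q = q then some (if q = t.obs then 1 else 0)
          else if q = t.src ∧ q = t.dst then some 1 else none)
      rw [if_pos rfl, NS.le_iff]
      exact ⟨rfl, Nat.zero_le _⟩
    · intro q q' hne hp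
      show (if q = q' then some (if q = t.obs then 1 else 0)
          else if q = t.src ∧ q' = t.dst then some 1 else none) = NS.sharp
      rw [if_neg hne, if_neg (fun hc : q = t.src ∧ q' = t.dst => hp (by rw [hc.1, hc.2]))]
      rfl
    · refine flowStep_iff.2 ⟨fun q q' => if q = q' then some (γ q - (if q = t.src then k else 0))
        else if q = t.src ∧ q' = t.dst then some k else none, rfl, rfl, ?_, ?_, ?_⟩
      · intro q q'
        by_cases hqq : q = q'
        · show NS.le (if q = q' then some (if q = t.obs then 1 else 0)
              else if q = t.src ∧ q' = t.dst then some 1 else none)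
            (if q = q' then some (γ q - (if q = t.src then k else 0))
              else if q = t.src ∧ q' = t.dst then some k else none)
          rw [if_pos hqq, if_pos hqq, NS.le_iff]
          refine ⟨rfl, ?_⟩
          simp only [Option.getD_some]
          by_cases h1 : q = t.obs
          · rw [if_pos h1]
            have e : γ q = γ t.obs := by rw [h1]
            by_cases h2 : q = t.src
            · have e2 : γ q = γ t.src := by rw [h2]
              have h3 := hsk1 (h1.symm.trans h2)
              rw [if_pos h2]
              omega
            · rw [if_neg h2]
              have e3 : γ t.obs = γ q := by rw [h1]
              omega
          · rw [if_neg h1]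
            omega
        · show NS.le (if q = q' then some (if q = t.obs then 1 else 0)
              else if q = t.src ∧ q' = t.dst then some 1 else none)
            (if q = q' then some (γ q - (if q = t.src then k else 0))
              else if q = t.src ∧ q' = t.dst then some k else none)
          rw [if_neg hqq, if_neg hqq]
          by_cases h1 : q = t.src ∧ q' = t.dst
          · rw [if_pos h1, if_pos h1, NS.le_iff]
            refine ⟨rfl, ?_⟩
            simp only [Option.getD_some]
            omega
          · rw [if_neg h1, if_neg h1]
            exact NS.le_refl _
      · intro q
        show (some (γ q) : NS) = ∑ q', if q = q' then some (γ q - (if q = t.src then k else 0))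
          else if q = t.src ∧ q' = t.dst then some k else none
        rw [Finset.sum_eq_sum_sdiff_singleton_add (Finset.mem_univ q)]
        by_cases hq : q = t.src
        · have hdiff : (∑ q' ∈ Finset.univ \ {q},
              ((if q = q' then some (γ q - (if q = t.src then k else 0))
                else if q = t.src ∧ q' = t.dst then some k else none) : NS)) = some k := by
            rw [Finset.sum_eq_single_of_mem t.dst
              (by rw [Finset.mem_sdiff, Finset.mem_singleton]
                  exact ⟨Finset.mem_univ _, fun hc => hsd (hc.trans hq).symm⟩)]
            · rw [if_neg (fun hc : q = t.dst => hsd (hq ▸ hc)), if_pos ⟨hq, rfl⟩]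
            · intro b hb hbd
              have hb' : b ≠ q := by
                have := (Finset.mem_sdiff.1 hb).2
                simpa using this
              rw [if_neg (Ne.symm hb'), if_neg (fun hc : q = t.src ∧ b = t.dst => hbd hc.2)]
              rfl
          rw [hdiff, if_pos rfl, if_pos hq]
          show (some (γ q) : NS) = some (k + (γ q - k))
          have e : γ q = γ t.src := by rw [hq]
          congr 1
          omega
        · have hdiff : (∑ q' ∈ Finset.univ \ {q},
              ((if q = q' then some (γ q - (if q = t.src then k else 0))
                else if q = t.src ∧ q' = t.dst then some k else none) : NS)) = 0 := by
            refine Finset.sum_eq_zero (fun b hb => ?_)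
            have hb' : b ≠ q := by
              have := (Finset.mem_sdiff.1 hb).2
              simpa using this
            rw [if_neg (Ne.symm hb'), if_neg (fun hc : q = t.src ∧ b = t.dst => hq hc.1)]
            rfl
          rw [hdiff, zero_add, if_pos rfl, if_neg hq]
          simp
      · intro q
        show (some (γ' q) : NS) = ∑ q', if q' = q then some (γ q' - (if q' = t.src then k else 0))
          else if q' = t.src ∧ q = t.dst then some k else none
        rw [Finset.sum_eq_sum_sdiff_singleton_add (Finset.mem_univ q)]
        have hnq := hnet q
        by_cases hq : q = t.dst
        · have hdiff : (∑ q' ∈ Finset.univ \ {q},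
              ((if q' = q then some (γ q' - (if q' = t.src then k else 0))
                else if q' = t.src ∧ q = t.dst then some k else none) : NS)) = some k := by
            rw [Finset.sum_eq_single_of_mem t.src
              (by rw [Finset.mem_sdiff, Finset.mem_singleton]
                  exact ⟨Finset.mem_univ _, fun hc => hsd (hc.trans hq)⟩)]
            · rw [if_neg (fun hc : t.src = q => hsd (hq ▸ hc)), if_pos ⟨rfl, hq⟩]
            · intro b hb hbs
              have hb' : b ≠ q := by
                have := (Finset.mem_sdiff.1 hb).2
                simpa using this
              rw [if_neg hb', if_neg (fun hc : b = t.src ∧ q = t.dst => hbs hc.1)]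
              rfl
          rw [hdiff, if_pos rfl, if_neg (fun hc : q = t.src => hsd (by rw [← hc, hq]))]
          rw [if_neg (fun hc : q = t.src => hsd (by rw [← hc, hq])), if_pos hq] at hnq
          show (some (γ' q) : NS) = some (k + (γ q - 0))
          congr 1
          omega
        · have hdiff : (∑ q' ∈ Finset.univ \ {q},
              ((if q' = q then some (γ q' - (if q' = t.src then k else 0))
                else if q' = t.src ∧ q = t.dst then some k else none) : NS)) = 0 := by
            refine Finset.sum_eq_zero (fun b hb => ?_)
            have hb' : b ≠ q := by
              have := (Finset.mem_sdiff.1 hb).2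
              simpa using this
            rw [if_neg hb', if_neg (fun hc : b = t.src ∧ q = t.dst => hq hc.2)]
            rfl
          rw [hdiff, zero_add, if_pos rfl]
          rw [if_neg hq] at hnq
          by_cases hq2 : q = t.src
          · rw [if_pos hq2]
            rw [if_pos hq2] at hnq
            show (some (γ' q) : NS) = some (γ q - k)
            have e : γ q = γ t.src := by rw [hq2]
            congr 1
            omega
          · rw [if_neg hq2]
            rw [if_neg hq2] at hnq
            have e : γ' q = γ q := by omega
            rw [e]
            simp

lemma tset_sound {Tr : L → IOTrans Q → L} {t : IOTrans Q} {a : TF Q L} {c c' : (Q → ℕ) × L}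
    (ha : a ∈ Tset Tr t) (h : FlowStep a c c') : ProdStep Tr c c' := by
  obtain ⟨hTr, h2, h3, h4, h5⟩ := ha
  obtain ⟨g, hc1, hc2, hle, hrow, hcol⟩ := flowStep_iff.1 h
  have hgoff : ∀ q q', q ≠ q' → (q, q') ≠ (t.src, t.dst) → g q q' = none := by
    intro q q' hne hp
    have hle' := hle q q'
    rw [h5 q q' hne hp] at hle'
    cases hg : g q q'
    · rfl
    · rw [hg] at hle'; simp [NS.sharp, NS.le] at hle'
  refine ⟨t, ?_, by rw [hc1, hc2]; exact hTr⟩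
  by_cases hsd : t.src = t.dst
  · have hgoff' : ∀ q q', q ≠ q' → g q q' = none := by
      intro q q' hne
      refine hgoff q q' hne (fun hp => hne ?_)
      have e1 : q = t.src := congrArg Prod.fst hp
      have e2 : q' = t.dst := congrArg Prod.snd hp
      rw [e1, e2, hsd]
    have hvals : ∀ q, (some (c.1 q) : NS) = g q q ∧ (some (c'.1 q) : NS) = g q q := by
      intro q
      constructor
      · rw [hrow q, Finset.sum_eq_single q]
        · intro b _ hb; exact hgoff' q b (Ne.symm hb)
        · intro hq; exact absurd (Finset.mem_univ q) hq
      · rw [hcol q, Finset.sum_eq_single q]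
        · intro b _ hb; exact hgoff' b q hb
        · intro hq; exact absurd (Finset.mem_univ q) hq
    have hcc : c'.1 = c.1 := by
      funext q
      have e1 := (hvals q).1
      have e2 := (hvals q).2
      rw [← e1] at e2
      exact Option.some_injective _ e2
    have hgd : ∀ q, (a.f q q).getD 0 ≤ c.1 q := by
      intro q
      have hh := NS.getD_le_of_le (hle q q)
      rw [← (hvals q).1] at hh
      exact hh
    have hobs : 1 ≤ c.1 t.obs ∧ (t.obs = t.src → 2 ≤ c.1 t.obs) := by
      by_cases hos : t.obs = t.src
      · have hb : t.obs = t.dst := hos.trans hsd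
        have h6 := NS.getD_le_of_le (h3 ⟨hos, hb⟩)
        simp only [Option.getD_some] at h6
        have h7 := hgd t.obs
        exact ⟨by omega, fun _ => by omega⟩
      · have h6 := NS.getD_le_of_le ((h2 (Or.inl hos)).1)
        simp only [Option.getD_some] at h6
        have h7 := hgd t.obs
        exact ⟨by omega, fun hc => absurd hc hos⟩
    have hsrc : 1 ≤ c.1 t.src := by
      by_cases hos : t.obs = t.src
      · have := hobs.2 hos
        have e : c.1 t.obs = c.1 t.src := by rw [hos]
        omega
      · have h6 := (h2 (Or.inl hos)).2
        rw [← hsd] at h6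
        have h7 := NS.getD_le_of_le h6
        simp only [Option.getD_some] at h7
        have h8 := hgd t.src
        omega
    rw [hcc]
    exact run_build_self hsd hobs.1 hsrc hobs.2
  · have hor : t.obs ≠ t.src ∨ t.obs ≠ t.dst := by
      by_cases hos : t.obs = t.src
      · exact Or.inr (fun hod => hsd (hos.symm.trans hod))
      · exact Or.inl hos
    have hfsd := (h2 hor).2
    have hfobs := (h2 hor).1
    have hk1 : 1 ≤ (g t.src t.dst).getD 0 := by
      have := NS.getD_le_of_le (NS.le_trans hfsd (hle t.src t.dst))
      simpa using this
    set k : ℕ := (g t.src t.dst).getD 0 with hkdef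
    have hrowd : ∀ q, c.1 q = (g q q).getD 0 + (if q = t.src then k else 0) := by
      intro q
      have e := congrArg (fun x : NS => x.getD 0) (hrow q)
      simp only [NS.getD_sum, Option.getD_some] at e
      rw [Finset.sum_eq_sum_sdiff_singleton_add (Finset.mem_univ q)] at e
      have ediff : (∑ q' ∈ Finset.univ \ {q}, (g q q').getD 0)
          = if q = t.src then k else 0 := by
        by_cases hq : q = t.src
        · subst hq
          rw [if_pos rfl]
          rw [Finset.sum_eq_single_of_mem t.dst (by simp [Ne.symm hsd])]
          intro b hb hbd
          have hb' : b ≠ t.src := by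
            have := (Finset.mem_sdiff.1 hb).2
            simpa using this
          rw [hgoff t.src b (Ne.symm hb') (fun hp => hbd (congrArg Prod.snd hp))]
          rfl
        · rw [if_neg hq]
          refine Finset.sum_eq_zero (fun b hb => ?_)
          have hb' : b ≠ q := by
            have := (Finset.mem_sdiff.1 hb).2
            simpa using this
          rw [hgoff q b (Ne.symm hb') (fun hp => hq (congrArg Prod.fst hp))]
          rfl
      rw [ediff] at e
      omega
    have hcold : ∀ q, c'.1 q = (g q q).getD 0 + (if q = t.dst then k else 0) := by
      intro q
      have e := congrArg (fun x : NS => x.getD 0) (hcol q)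
      simp only [NS.getD_sum, Option.getD_some] at e
      rw [Finset.sum_eq_sum_sdiff_singleton_add (Finset.mem_univ q)] at e
      have ediff : (∑ q' ∈ Finset.univ \ {q}, (g q' q).getD 0)
          = if q = t.dst then k else 0 := by
        by_cases hq : q = t.dst
        · subst hq
          rw [if_pos rfl]
          rw [Finset.sum_eq_single_of_mem t.src (by simp [hsd])]
          intro b hb hbs
          have hb' : b ≠ t.dst := by
            have := (Finset.mem_sdiff.1 hb).2
            simpa using this
          rw [hgoff b t.dst hb' (fun hp => hbs (congrArg Prod.fst hp))]
          rfl
        · rw [if_neg hq]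
          refine Finset.sum_eq_zero (fun b hb => ?_)
          have hb' : b ≠ q := by
            have := (Finset.mem_sdiff.1 hb).2
            simpa using this
          rw [hgoff b q hb' (fun hp => hq (congrArg Prod.snd hp))]
          rfl
      rw [ediff] at e
      omega
    have hobsd : 1 ≤ (g t.obs t.obs).getD 0 := by
      have := NS.getD_le_of_le (NS.le_trans hfobs (hle t.obs t.obs))
      simpa using this
    have hrun := run_build_move hsd k c.1 hk1
      (by rw [hrowd t.src, if_pos rfl]; omega)
      (by rw [hrowd t.obs]; omega)
      (by intro hos
          have e1 : (g t.obs t.obs).getD 0 = (g t.src t.src).getD 0 := by rw [hos]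
          rw [hrowd t.src, if_pos rfl]
          omega)
    have hfin : (fun q => c.1 q - (if q = t.src then k else 0)
        + (if q = t.dst then k else 0)) = c'.1 := by
      funext q
      have e1 := hrowd q
      have e2 := hcold q
      omega
    rw [← hfin]
    exact hrun


lemma flow_sound {Tr : L → IOTrans Q → L} :
    ∀ (w : List (IOTrans Q)) (tf : TF Q L), tf ∈ Tword Tr w →
    ∀ c c' : (Q → ℕ) × L, FlowStep tf c c' → Relation.ReflTransGen (ProdStep Tr) c c' := by
  intro w
  induction w with
  | nil =>
    intro tf htf c c' h
    rw [teps_sound htf h]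
  | cons t w ih =>
    intro tf htf c c'' h
    simp only [Tword, setProd, Set.mem_iUnion] at htf
    obtain ⟨a, ha, b, hb, hprod⟩ := htf
    obtain ⟨c', h1, h2⟩ := flow_decompose hprod h (tset_diag_some ha)
    exact Relation.ReflTransGen.head (tset_sound ha h1) (ih b hb c' c'' h2)

lemma flow_complete {Tr : L → IOTrans Q → L} {c c' : (Q → ℕ) × L}
    (h : Relation.ReflTransGen (ProdStep Tr) c c') :
    ∃ w tf, tf ∈ Tword Tr w ∧ FlowStep tf c c' := by
  induction h using Relation.ReflTransGen.head_induction_on with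
  | refl =>
    obtain ⟨tf, htf, hstep⟩ := teps_flow c'
    exact ⟨[], tf, htf, hstep⟩
  | @head a cm hstep hrest ih =>
    obtain ⟨w, tfb, htfb, hb⟩ := ih
    obtain ⟨t, hrun, htr⟩ := hstep
    obtain ⟨tfa, hta, hfa⟩ := tset_complete (Tr := Tr) a.2 hrun
    have hc : ((cm.1, Tr a.2 t) : (Q → ℕ) × L) = cm := Prod.ext_iff.2 ⟨rfl, htr⟩
    have ha' : ((a.1, a.2) : (Q → ℕ) × L) = a := rfl
    rw [ha', hc] at hfa
    obtain ⟨x, hx, hfx⟩ := flow_compose hfa hb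
    refine ⟨t :: w, x, ?_, hfx⟩
    simp only [Tword, setProd, Set.mem_iUnion]
    exact ⟨tfa, hta, tfb, htfb, hx⟩

lemma exists_minimal_below {Tr : L → IOTrans Q → L} {tf : TF Q L} (htf : tf ∈ TStar Tr) :
    ∃ tf', tf' ∈ TStar Tr ∧ TF.le tf' tf ∧ MinimalIn (TStar Tr) tf' := by
  classical
  have hPex : ∃ n, ∃ t' ∈ TStar Tr, TF.le t' tf ∧ TF.weight t' = n :=
    ⟨tf.weight, tf, htf, ⟨rfl, rfl, fun q q' => NS.le_refl _⟩, rfl⟩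
  obtain ⟨t', ht'star, ht'le, ht'w⟩ := Nat.find_spec hPex
  refine ⟨t', ht'star, ht'le, ht'star, ?_⟩
  intro t'' ht''star ht''le
  have hwle : ∀ q q', (t''.f q q').getD 0 ≤ (t'.f q q').getD 0 :=
    fun q q' => NS.getD_le_of_le (ht''le.2.2 q q')
  have hrowle : ∀ q ∈ Finset.univ, (∑ q', (t''.f q q').getD 0) ≤ ∑ q', (t'.f q q').getD 0 :=
    fun q _ => Finset.sum_le_sum (fun q' _ => hwle q q')
  have hw2 : t''.weight ≤ t'.weight := Finset.sum_le_sum hrowle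
  have hP'' : ∃ t0 ∈ TStar Tr, TF.le t0 tf ∧ TF.weight t0 = t''.weight :=
    ⟨t'', ht''star, ⟨ht''le.1.trans ht'le.1, ht''le.2.1.trans ht'le.2.1,
      fun q q' => NS.le_trans (ht''le.2.2 q q') (ht'le.2.2 q q')⟩, rfl⟩
  have hge : Nat.find hPex ≤ t''.weight := Nat.find_min' hPex hP''
  have hweq : t''.weight = t'.weight := le_antisymm hw2 (by omega)
  have hfeq : t''.f = t'.f := by
    funext q q'
    have h1 := (Finset.sum_eq_sum_iff_of_le hrowle).1 hweq q (Finset.mem_univ q)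
    have h2 := (Finset.sum_eq_sum_iff_of_le (fun q' _ => hwle q q')).1 h1 q' (Finset.mem_univ q')
    exact NS.ext2 (NS.le_iff.1 (ht''le.2.2 q q')).1 h2
  obtain ⟨hsrc, hdst, _⟩ := ht''le
  cases t'' with | mk f1 s1 d1 =>
  cases t' with | mk f2 s2 d2 =>
  simp only [TF.mk.injEq]
  exact ⟨hfeq, hsrc, hdst⟩

lemma pick_entry (v : Q → NS) (N : ℕ) (hsum : (some N : NS) = ∑ x, v x) :
    ∃ r, (v r).isSome = true ∧ N ≤ Fintype.card Q * (v r).getD 0 := by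
  classical
  have hs : (∑ x, v x).isSome = true := by rw [← hsum]; rfl
  obtain ⟨x0, _, hx0⟩ := (NS.isSome_sum _ _).1 hs
  set F := Finset.univ.filter (fun r => (v r).isSome = true) with hF
  have hFne : F.Nonempty := ⟨x0, by simp [hF, hx0]⟩
  obtain ⟨r, hrF, hrmax⟩ := Finset.exists_max_image F (fun r => (v r).getD 0) hFne
  refine ⟨r, (Finset.mem_filter.1 hrF).2, ?_⟩
  have hN : N = ∑ x, (v x).getD 0 := by
    have := congrArg (fun x : NS => x.getD 0) hsum
    simpa [NS.getD_sum] using this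
  have h1 : (∑ x, (v x).getD 0) = ∑ x ∈ F, (v x).getD 0 := by
    symm
    apply Finset.sum_subset (Finset.filter_subset _ _)
    intro x _ hx
    simp only [hF, Finset.mem_filter, Finset.mem_univ, true_and] at hx
    cases hv : v x
    · rfl
    · rw [hv] at hx; simp at hx
  have h2 : (∑ x ∈ F, (v x).getD 0) ≤ F.card * (v r).getD 0 := by
    have := Finset.sum_le_card_nsmul F (fun x => (v x).getD 0) ((v r).getD 0)
      (fun x hx => hrmax x hx)
    simpa [smul_eq_mul] using this
  have h3 : F.card ≤ Fintype.card Q := by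
    rw [hF, ← Finset.card_univ]
    exact Finset.card_filter_le _ _
  calc N = ∑ x, (v x).getD 0 := hN
    _ = ∑ x ∈ F, (v x).getD 0 := h1
    _ ≤ F.card * (v r).getD 0 := h2
    _ ≤ Fintype.card Q * (v r).getD 0 := Nat.mul_le_mul_right _ h3

lemma flowStepG_inc {tf : TF Q L} {g : Q → Q → NS} {c c' : (Q → ℕ) × L} {r q : Q}
    (h : FlowStepG tf g c c') (hsome : (g r q).isSome = true) :
    FlowStep tf (addAgent c.1 r, c.2) (addAgent c'.1 q, c'.2) := by
  obtain ⟨h1, h2, h3, h4, h5⟩ := h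
  refine flowStep_iff.2 ⟨fun a b => g a b + (if a = r ∧ b = q then some 1 else 0),
    h1, h2, ?_, ?_, ?_⟩
  · intro a b
    show NS.le (tf.f a b) (g a b + (if a = r ∧ b = q then some 1 else 0))
    by_cases hab : a = r ∧ b = q
    · rw [if_pos hab]
      have hl := h3 a b
      rw [NS.le_iff] at hl ⊢
      rw [NS.isSome_add, NS.getD_add]
      have hgs : (g a b).isSome = true := by rw [hab.1, hab.2]; exact hsome
      refine ⟨by rw [hl.1, hgs]; rfl, ?_⟩
      have := hl.2
      simp only [Option.getD_some]
      omega
    · rw [if_neg hab, add_zero]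
      exact h3 a b
  · intro a
    show (some (addAgent c.1 r a) : NS) = ∑ b, (g a b + (if a = r ∧ b = q then some 1 else 0))
    rw [Finset.sum_add_distrib]
    have hite : (∑ b, ((if a = r ∧ b = q then some 1 else 0) : NS))
        = if a = r then some 1 else 0 := by
      by_cases ha : a = r
      · rw [if_pos ha, Finset.sum_eq_single q]
        · rw [if_pos ⟨ha, rfl⟩]
        · intro b _ hb; rw [if_neg (fun hc => hb hc.2)]
        · intro hq; exact absurd (Finset.mem_univ q) hq
      · rw [if_neg ha]
        exact Finset.sum_eq_zero (fun b _ => if_neg (fun hc => ha hc.1))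
    rw [hite, ← h4 a]
    show (some (c.1 a + if a = r then 1 else 0) : NS) = some (c.1 a) + _
    by_cases ha : a = r
    · rw [if_pos ha, if_pos ha]; rfl
    · rw [if_neg ha, if_neg ha]; rfl
  · intro b
    show (some (addAgent c'.1 q b) : NS) = ∑ a, (g a b + (if a = r ∧ b = q then some 1 else 0))
    rw [Finset.sum_add_distrib]
    have hite : (∑ a, ((if a = r ∧ b = q then some 1 else 0) : NS))
        = if b = q then some 1 else 0 := by
      by_cases hb : b = q
      · rw [if_pos hb, Finset.sum_eq_single r]
        · rw [if_pos ⟨rfl, hb⟩]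
        · intro a _ ha; rw [if_neg (fun hc => ha hc.1)]
        · intro hq; exact absurd (Finset.mem_univ r) hq
      · rw [if_neg hb]
        exact Finset.sum_eq_zero (fun a _ => if_neg (fun hc => hb hc.2))
    rw [hite, ← h5 b]
    show (some (c'.1 b + if b = q then 1 else 0) : NS) = some (c'.1 b) + _
    by_cases hb : b = q
    · rw [if_pos hb, if_pos hb]; rfl
    · rw [if_neg hb, if_neg hb]; rfl

lemma flowStepG_dec {tf : TF Q L} {g : Q → Q → NS} {γ0 γ1 : Q → ℕ} {ℓ0 ℓ1 : L} {r q : Q}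
    (h : FlowStepG tf g (addAgent γ0 r, ℓ0) (addAgent γ1 q, ℓ1))
    (hlt : (tf.f r q).getD 0 < (g r q).getD 0) :
    FlowStep tf (γ0, ℓ0) (γ1, ℓ1) := by
  obtain ⟨h1, h2, h3, h4, h5⟩ := h
  have hgs : (g r q).isSome = true := by
    cases hg : g r q
    · exfalso
      rw [hg, Option.getD_none] at hlt
      omega
    · rfl
  set m : ℕ := (g r q).getD 0 with hm
  have hm1 : 1 ≤ m := by omega
  refine flowStep_iff.2 ⟨fun a b => if a = r ∧ b = q then some (m - 1) else g a b,
    h1, h2, ?_, ?_, ?_⟩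
  · intro a b
    show NS.le (tf.f a b) (if a = r ∧ b = q then some (m - 1) else g a b)
    by_cases hab : a = r ∧ b = q
    · rw [if_pos hab]
      have hl := h3 a b
      rw [NS.le_iff] at hl ⊢
      have hgs' : (g a b).isSome = true := by rw [hab.1, hab.2]; exact hgs
      refine ⟨by rw [hl.1, hgs']; rfl, ?_⟩
      have hlt' : (tf.f a b).getD 0 < m := by rw [hab.1, hab.2]; exact hlt
      simp only [Option.getD_some]
      omega
    · rw [if_neg hab]
      exact h3 a b
  · intro a
    show (some (γ0 a) : NS) = ∑ b, (if a = r ∧ b = q then some (m - 1) else g a b)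
    by_cases ha : a = r
    · refine (NS.eq_some_iff.2 ⟨?_, ?_⟩)
      · refine (NS.isSome_sum _ _).2 ⟨q, Finset.mem_univ q, ?_⟩
        rw [if_pos ⟨ha, rfl⟩]; rfl
      · have e : addAgent γ0 r a + 0 = ∑ b, (g a b).getD 0 := by
          have := congrArg (fun x : NS => x.getD 0) (h4 a)
          simpa [NS.getD_sum] using this
        have ea : addAgent γ0 r a = γ0 a + 1 := by simp [addAgent, ha]
        rw [ea] at e
        rw [NS.getD_sum]
        rw [Finset.sum_eq_sum_sdiff_singleton_add (Finset.mem_univ q)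
          (fun b => ((if a = r ∧ b = q then some (m - 1) else g a b) : NS).getD 0)]
        rw [Finset.sum_eq_sum_sdiff_singleton_add (Finset.mem_univ q)
          (fun b => (g a b).getD 0)] at e
        have ed : (∑ b ∈ Finset.univ \ {q},
            ((if a = r ∧ b = q then some (m - 1) else g a b) : NS).getD 0)
            = ∑ b ∈ Finset.univ \ {q}, (g a b).getD 0 := by
          refine Finset.sum_congr rfl (fun b hb => ?_)
          have hb' : b ≠ q := by
            have := (Finset.mem_sdiff.1 hb).2
            simpa using this
          rw [if_neg (fun hc => hb' hc.2)]
        rw [ed, if_pos ⟨ha, rfl⟩]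
        simp only [Option.getD_some]
        have em : (g a q).getD 0 = m := by rw [ha]
        omega
    · have he : ∀ b, ((if a = r ∧ b = q then some (m - 1) else g a b) : NS) = g a b :=
        fun b => if_neg (fun hc => ha hc.1)
      rw [Finset.sum_congr rfl (fun b _ => he b), ← h4 a]
      show (some (γ0 a) : NS) = some (addAgent γ0 r a)
      have he2 : addAgent γ0 r a = γ0 a := by simp [addAgent, ha]
      rw [he2]
  · intro b
    show (some (γ1 b) : NS) = ∑ a, (if a = r ∧ b = q then some (m - 1) else g a b)
    by_cases hb : b = q
    · refine (NS.eq_some_iff.2 ⟨?_, ?_⟩)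
      · refine (NS.isSome_sum _ _).2 ⟨r, Finset.mem_univ r, ?_⟩
        rw [if_pos ⟨rfl, hb⟩]; rfl
      · have e : addAgent γ1 q b + 0 = ∑ a, (g a b).getD 0 := by
          have := congrArg (fun x : NS => x.getD 0) (h5 b)
          simpa [NS.getD_sum] using this
        have ea : addAgent γ1 q b = γ1 b + 1 := by simp [addAgent, hb]
        rw [ea] at e
        rw [NS.getD_sum]
        rw [Finset.sum_eq_sum_sdiff_singleton_add (Finset.mem_univ r)
          (fun a => ((if a = r ∧ b = q then some (m - 1) else g a b) : NS).getD 0)]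
        rw [Finset.sum_eq_sum_sdiff_singleton_add (Finset.mem_univ r)
          (fun a => (g a b).getD 0)] at e
        have ed : (∑ a ∈ Finset.univ \ {r},
            ((if a = r ∧ b = q then some (m - 1) else g a b) : NS).getD 0)
            = ∑ a ∈ Finset.univ \ {r}, (g a b).getD 0 := by
          refine Finset.sum_congr rfl (fun a ha => ?_)
          have ha' : a ≠ r := by
            have := (Finset.mem_sdiff.1 ha).2
            simpa using this
          rw [if_neg (fun hc => ha' hc.1)]
        rw [ed, if_pos ⟨rfl, hb⟩]
        simp only [Option.getD_some]
        have em : (g r b).getD 0 = m := by rw [hb]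
        omega
    · have he : ∀ a, ((if a = r ∧ b = q then some (m - 1) else g a b) : NS) = g a b :=
        fun a => if_neg (fun hc => hb hc.2)
      rw [Finset.sum_congr rfl (fun a _ => he a), ← h5 b]
      show (some (γ1 b) : NS) = some (addAgent γ1 q b)
      have he2 : addAgent γ1 q b = γ1 b := by simp [addAgent, hb]
      rw [he2]

end Flows

/-- If `S` is `K'`-blind and `2B` bounds the weight of minimal transfer flows
of `T(Δ^*)`, then `post*(S)` and `pre*(S)` are `K`-blind for
`K := |Q|² · max(K', 2B)`. -/
theorem postStar_preStar_blind {Q L : Type} [Fintype Q] [DecidableEq Q]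
    (Tr : L → IOTrans Q → L) (S : Set ((Q → ℕ) × L)) (K' B : ℕ)
    (hS : Blind K' S)
    (hB : ∀ tf, MinimalIn (TStar Tr) tf → tf.weight ≤ 2 * B) :
    Blind ((Fintype.card Q) ^ 2 * max K' (2 * B)) (postStar Tr S) ∧
    Blind ((Fintype.card Q) ^ 2 * max K' (2 * B)) (preStar Tr S) := by
  classical
  set n := Fintype.card Q with hn
  set M := max K' (2 * B) with hM
  have hwb : ∀ tf : TF Q L, MinimalIn (TStar Tr) tf → ∀ a b, (tf.f a b).getD 0 ≤ 2 * B := by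
    intro tf hmin a b
    have h1 : (tf.f a b).getD 0 ≤ ∑ b', (tf.f a b').getD 0 :=
      Finset.single_le_sum (f := fun b' => (tf.f a b').getD 0)
        (fun _ _ => Nat.zero_le _) (Finset.mem_univ b)
    have h2 : (∑ b', (tf.f a b').getD 0) ≤ tf.weight :=
      Finset.single_le_sum (f := fun a => ∑ b', (tf.f a b').getD 0)
        (fun _ _ => Nat.zero_le _) (Finset.mem_univ a)
    exact le_trans (h1.trans h2) (hB tf hmin)
  constructor
  · -- postStar
    intro γ ℓ q hq
    have hn1 : 0 < n := Fintype.card_pos_iff.2 ⟨q⟩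
    constructor
    · rintro ⟨c0, hc0S, hreach⟩
      obtain ⟨w, tf0, htf0, hflow0⟩ := flow_complete hreach
      obtain ⟨tf, htfS, htfle, htfmin⟩ := exists_minimal_below (Set.mem_iUnion.2 ⟨w, htf0⟩)
      obtain ⟨g, hg1, hg2, hg3, hg4, hg5⟩ := flowStep_iff.1 hflow0
      have hG : FlowStepG tf g c0 (γ, ℓ) :=
        ⟨hg1.trans htfle.1.symm, hg2.trans htfle.2.1.symm,
          fun a b => NS.le_trans (htfle.2.2 a b) (hg3 a b), hg4, hg5⟩
      obtain ⟨r, hrs, hrbound⟩ := pick_entry (fun r => g r q) (γ q) (hg5 q)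
      rw [← hn] at hrbound
      have hKm : M ≤ (g r q).getD 0 := by
        have h1 : n ^ 2 * M ≤ n * (g r q).getD 0 := le_trans hq hrbound
        have e : n ^ 2 * M = n * (n * M) := by ring
        rw [e] at h1
        have h2 : n * M ≤ (g r q).getD 0 := Nat.le_of_mul_le_mul_left h1 hn1
        calc M ≤ n * M := Nat.le_mul_of_pos_left M hn1
          _ ≤ (g r q).getD 0 := h2
      have hc0r : (g r q).getD 0 ≤ c0.1 r := by
        have hh := congrArg (fun x : NS => x.getD 0) (hg4 r)
        simp only [NS.getD_sum, Option.getD_some] at hh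
        have h2 : (g r q).getD 0 ≤ ∑ b, (g r b).getD 0 :=
          Finset.single_le_sum (f := fun b => (g r b).getD 0)
            (fun _ _ => Nat.zero_le _) (Finset.mem_univ q)
        omega
      have hK'r : K' ≤ c0.1 r :=
        le_trans (le_trans (le_max_left _ _) hKm) hc0r
      have hSmem : (addAgent c0.1 r, c0.2) ∈ S := (hS c0.1 c0.2 r hK'r).1 hc0S
      have hstep := flowStepG_inc hG hrs
      obtain ⟨w', hw'⟩ := Set.mem_iUnion.1 htfS
      exact ⟨(addAgent c0.1 r, c0.2), hSmem, flow_sound w' tf hw' _ _ hstep⟩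
    · rintro ⟨c0, hc0S, hreach⟩
      obtain ⟨w, tf0, htf0, hflow0⟩ := flow_complete hreach
      obtain ⟨tf, htfS, htfle, htfmin⟩ := exists_minimal_below (Set.mem_iUnion.2 ⟨w, htf0⟩)
      obtain ⟨g, hg1, hg2, hg3, hg4, hg5⟩ := flowStep_iff.1 hflow0
      have hG : FlowStepG tf g c0 (addAgent γ q, ℓ) :=
        ⟨hg1.trans htfle.1.symm, hg2.trans htfle.2.1.symm,
          fun a b => NS.le_trans (htfle.2.2 a b) (hg3 a b), hg4, hg5⟩
      obtain ⟨r, hrs, hrbound⟩ := pick_entry (fun r => g r q) (addAgent γ q q) (hg5 q)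
      have hNeq : addAgent γ q q = γ q + 1 := by simp [addAgent]
      rw [hNeq, ← hn] at hrbound
      have hKm : M + 1 ≤ (g r q).getD 0 := by
        have h1 : n ^ 2 * M + 1 ≤ n * (g r q).getD 0 := by omega
        have e : n ^ 2 * M = n * (n * M) := by ring
        have h2 : n * (n * M) < n * (g r q).getD 0 := by omega
        have h3 : n * M < (g r q).getD 0 := Nat.lt_of_mul_lt_mul_left h2
        have h4 : M ≤ n * M := Nat.le_mul_of_pos_left M hn1
        omega
      have hc0r : (g r q).getD 0 ≤ c0.1 r := by
        have hh := congrArg (fun x : NS => x.getD 0) (hg4 r)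
        simp only [NS.getD_sum, Option.getD_some] at hh
        have h2 : (g r q).getD 0 ≤ ∑ b, (g r b).getD 0 :=
          Finset.single_le_sum (f := fun b => (g r b).getD 0)
            (fun _ _ => Nat.zero_le _) (Finset.mem_univ q)
        omega
      set γ0 : Q → ℕ := fun a => c0.1 a - (if a = r then 1 else 0) with hγ0
      have hc0eq : c0 = (addAgent γ0 r, c0.2) := by
        refine Prod.ext_iff.2 ⟨?_, rfl⟩
        funext a
        simp only [addAgent, hγ0]
        by_cases ha : a = r
        · subst ha
          simp only [eq_self_iff_true, if_true]
          omega
        · simp only [if_neg ha]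
          omega
      have hγ0r : K' ≤ γ0 r := by
        have h1 : γ0 r = c0.1 r - 1 := by simp [hγ0]
        have h2 : K' ≤ M := le_max_left _ _
        omega
      have hSmem : (γ0, c0.2) ∈ S := by
        refine (hS γ0 c0.2 r hγ0r).2 ?_
        rw [← hc0eq]
        exact hc0S
      have hlt : (tf.f r q).getD 0 < (g r q).getD 0 := by
        have h1 := hwb tf htfmin r q
        have h2 : 2 * B ≤ M := le_max_right _ _
        omega
      rw [hc0eq] at hG
      have hstep := flowStepG_dec hG hlt
      obtain ⟨w', hw'⟩ := Set.mem_iUnion.1 htfS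
      exact ⟨(γ0, c0.2), hSmem, flow_sound w' tf hw' _ _ hstep⟩
  · -- preStar
    intro γ ℓ q hq
    have hn1 : 0 < n := Fintype.card_pos_iff.2 ⟨q⟩
    constructor
    · rintro ⟨c1, hc1S, hreach⟩
      obtain ⟨w, tf0, htf0, hflow0⟩ := flow_complete hreach
      obtain ⟨tf, htfS, htfle, htfmin⟩ := exists_minimal_below (Set.mem_iUnion.2 ⟨w, htf0⟩)
      obtain ⟨g, hg1, hg2, hg3, hg4, hg5⟩ := flowStep_iff.1 hflow0
      have hG : FlowStepG tf g (γ, ℓ) c1 :=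
        ⟨hg1.trans htfle.1.symm, hg2.trans htfle.2.1.symm,
          fun a b => NS.le_trans (htfle.2.2 a b) (hg3 a b), hg4, hg5⟩
      obtain ⟨r, hrs, hrbound⟩ := pick_entry (fun b => g q b) (γ q) (hg4 q)
      rw [← hn] at hrbound
      have hKm : M ≤ (g q r).getD 0 := by
        have h1 : n ^ 2 * M ≤ n * (g q r).getD 0 := le_trans hq hrbound
        have e : n ^ 2 * M = n * (n * M) := by ring
        rw [e] at h1
        have h2 : n * M ≤ (g q r).getD 0 := Nat.le_of_mul_le_mul_left h1 hn1
        calc M ≤ n * M := Nat.le_mul_of_pos_left M hn1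
          _ ≤ (g q r).getD 0 := h2
      have hc1r : (g q r).getD 0 ≤ c1.1 r := by
        have hh := congrArg (fun x : NS => x.getD 0) (hg5 r)
        simp only [NS.getD_sum, Option.getD_some] at hh
        have h2 : (g q r).getD 0 ≤ ∑ a, (g a r).getD 0 :=
          Finset.single_le_sum (f := fun a => (g a r).getD 0)
            (fun _ _ => Nat.zero_le _) (Finset.mem_univ q)
        omega
      have hK'r : K' ≤ c1.1 r :=
        le_trans (le_trans (le_max_left _ _) hKm) hc1r
      have hSmem : (addAgent c1.1 r, c1.2) ∈ S := (hS c1.1 c1.2 r hK'r).1 hc1S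
      have hstep := flowStepG_inc hG hrs
      obtain ⟨w', hw'⟩ := Set.mem_iUnion.1 htfS
      exact ⟨(addAgent c1.1 r, c1.2), hSmem, flow_sound w' tf hw' _ _ hstep⟩
    · rintro ⟨c1, hc1S, hreach⟩
      obtain ⟨w, tf0, htf0, hflow0⟩ := flow_complete hreach
      obtain ⟨tf, htfS, htfle, htfmin⟩ := exists_minimal_below (Set.mem_iUnion.2 ⟨w, htf0⟩)
      obtain ⟨g, hg1, hg2, hg3, hg4, hg5⟩ := flowStep_iff.1 hflow0
      have hG : FlowStepG tf g (addAgent γ q, ℓ) c1 :=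
        ⟨hg1.trans htfle.1.symm, hg2.trans htfle.2.1.symm,
          fun a b => NS.le_trans (htfle.2.2 a b) (hg3 a b), hg4, hg5⟩
      obtain ⟨r, hrs, hrbound⟩ := pick_entry (fun b => g q b) (addAgent γ q q) (hg4 q)
      have hNeq : addAgent γ q q = γ q + 1 := by simp [addAgent]
      rw [hNeq, ← hn] at hrbound
      have hKm : M + 1 ≤ (g q r).getD 0 := by
        have h1 : n ^ 2 * M + 1 ≤ n * (g q r).getD 0 := by omega
        have e : n ^ 2 * M = n * (n * M) := by ring
        have h2 : n * (n * M) < n * (g q r).getD 0 := by omega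
        have h3 : n * M < (g q r).getD 0 := Nat.lt_of_mul_lt_mul_left h2
        have h4 : M ≤ n * M := Nat.le_mul_of_pos_left M hn1
        omega
      have hc1r : (g q r).getD 0 ≤ c1.1 r := by
        have hh := congrArg (fun x : NS => x.getD 0) (hg5 r)
        simp only [NS.getD_sum, Option.getD_some] at hh
        have h2 : (g q r).getD 0 ≤ ∑ a, (g a r).getD 0 :=
          Finset.single_le_sum (f := fun a => (g a r).getD 0)
            (fun _ _ => Nat.zero_le _) (Finset.mem_univ q)
        omega
      set γ1 : Q → ℕ := fun a => c1.1 a - (if a = r then 1 else 0) with hγ1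
      have hc1eq : c1 = (addAgent γ1 r, c1.2) := by
        refine Prod.ext_iff.2 ⟨?_, rfl⟩
        funext a
        simp only [addAgent, hγ1]
        by_cases ha : a = r
        · subst ha
          simp only [eq_self_iff_true, if_true]
          omega
        · simp only [if_neg ha]
          omega
      have hγ1r : K' ≤ γ1 r := by
        have h1 : γ1 r = c1.1 r - 1 := by simp [hγ1]
        have h2 : K' ≤ M := le_max_left _ _
        omega
      have hSmem : (γ1, c1.2) ∈ S := by
        refine (hS γ1 c1.2 r hγ1r).2 ?_
        rw [← hc1eq]
        exact hc1S
      have hlt : (tf.f q r).getD 0 < (g q r).getD 0 := by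
        have h1 := hwb tf htfmin q r
        have h2 : 2 * B ≤ M := le_max_right _ _
        omega
      rw [hc1eq] at hG
      have hstep := flowStepG_dec hG hlt
      obtain ⟨w', hw'⟩ := Set.mem_iUnion.1 htfS
      exact ⟨(γ1, c1.2), hSmem, flow_sound w' tf hw' _ _ hstep⟩
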